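/- arXiv:1501.03694 — 7 statements merged into one kernel-verified Lean document; each statement's English description precedes it below -/
import Mathlib

section
/- Let d ∈ (0, 1/2) and t ∈ ℝ. Then the Mandelbrot–van Ness kernel function s ↦ (max(t−s,0))^d − (max(−s,0))^d belongs to L²(ℝ) with respect to Lebesgue measure. -/
/-!
For `s < min t 0` both arguments of the kernel are positive, and concavity of `x ↦ x ^ d` bounds
the kernel by `d |t| (min t 0 - s) ^ (d - 1)`, whose square is integrable at `-∞` exactly because
`2 (d - 1) < -1`, i.e. `d < 1/2`. For `s ≥ max t 0` the kernel vanishes, and in between it is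
continuous on a compact interval.
-/

open MeasureTheory Set

lemma Real.rpow_sub_rpow_le_mul_sub {d x y : ℝ} (hd0 : 0 ≤ d) (hd1 : d ≤ 1) (hx : 0 ≤ x)
    (hy : 0 < y) : x ^ d - y ^ d ≤ d * y ^ (d - 1) * (x - y) := by
  have hbernoulli := rpow_one_add_le_one_add_mul_self
    (s := (x - y) / y) (by rw [le_div_iff₀ hy]; linarith) hd0 hd1
  have hxy : 1 + (x - y) / y = x / y := by field_simp; ring
  rw [hxy, Real.div_rpow hx hy.le, div_le_iff₀ (Real.rpow_pos_of_pos hy d)] at hbernoulli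
  rw [Real.rpow_sub_one hy.ne']
  calc x ^ d - y ^ d ≤ (1 + d * ((x - y) / y)) * y ^ d - y ^ d := by linarith
    _ = d * (y ^ d / y) * (x - y) := by field_simp; ring

lemma Real.abs_rpow_sub_rpow_le {d x y : ℝ} (hd0 : 0 ≤ d) (hd1 : d ≤ 1) (hx : 0 < x)
    (hy : 0 < y) : |x ^ d - y ^ d| ≤ d * min x y ^ (d - 1) * |x - y| := by
  wlog hyx : y ≤ x generalizing x y
  · simpa only [abs_sub_comm, min_comm] using this hy hx (le_of_not_ge hyx)
  rw [min_eq_right hyx, abs_of_nonneg (sub_nonneg.2 (Real.rpow_le_rpow hy.le hyx hd0)),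
    abs_of_nonneg (sub_nonneg.2 hyx)]
  exact Real.rpow_sub_rpow_le_mul_sub hd0 hd1 hx.le hy

lemma integrableOn_Iio_sub_rpow (c : ℝ) {p : ℝ} (hp : p < -1) :
    IntegrableOn (fun s : ℝ => (c - s) ^ p) (Iio (c - 1)) := by
  have h := ((Measure.measurePreserving_sub_left volume c).integrableOn_comp_preimage
    (MeasurableEquiv.subLeft c).measurableEmbedding).2 (integrableOn_Ioi_rpow_of_lt hp one_pos)
  rwa [preimage_const_sub_Ioi] at h

lemma Continuous.integrable_of_integrableOn_Iio_of_eq_zero {E : Type*} [NormedAddCommGroup E]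
    {f : ℝ → E} (hf : Continuous f) {a b : ℝ} (hIio : IntegrableOn f (Iio a))
    (hzero : ∀ s, b < s → f s = 0) : Integrable f := by
  have hIoi : IntegrableOn f (Ioi b) :=
    integrableOn_zero.congr_fun (fun s hs => (hzero s hs).symm) measurableSet_Ioi
  have hcover : Iio a ∪ Icc a b ∪ Ioi b = univ := by
    ext s
    simp only [mem_union, mem_Iio, mem_Icc, mem_Ioi, mem_univ, iff_true]
    by_contra! h
    linarith [h.1.1, h.1.2 h.1.1, h.2]
  rw [← integrableOn_univ, ← hcover]
  exact (hIio.union hf.integrableOn_Icc).union hIoi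

noncomputable def mvnKernel (d t s : ℝ) : ℝ :=
  (max (t - s) 0) ^ d - (max (-s) 0) ^ d

lemma continuous_mvnKernel {d : ℝ} (hd : 0 ≤ d) (t : ℝ) : Continuous (mvnKernel d t) := by
  unfold mvnKernel
  fun_prop (disch := exact hd)

lemma mvnKernel_eq_zero_of_max_le (d : ℝ) {t s : ℝ} (hs : max t 0 ≤ s) : mvnKernel d t s = 0 := by
  rw [mvnKernel, max_eq_right (by linarith [le_max_left t 0]),
    max_eq_right (by linarith [le_max_right t 0]), sub_self]

lemma mvnKernel_sq_le {d t s : ℝ} (hd0 : 0 ≤ d) (hd1 : d ≤ 1) (hs : s < min t 0) :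
    mvnKernel d t s ^ 2 ≤ (d * t) ^ 2 * (min t 0 - s) ^ (2 * d - 2) := by
  have hts : 0 < t - s := by linarith [min_le_left t 0]
  have hns : 0 < -s := by linarith [min_le_right t 0]
  have hbound := Real.abs_rpow_sub_rpow_le hd0 hd1 hts hns
  rw [show min (t - s) (-s) = min t 0 - s by rw [← min_sub_sub_right, zero_sub],
    show t - s - -s = t by ring] at hbound
  have hpow : (min t 0 - s) ^ (2 * d - 2) = ((min t 0 - s) ^ (d - 1)) ^ 2 := by
    rw [← Real.rpow_mul_natCast (by linarith)]
    ring_nf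
  rw [mvnKernel, max_eq_left hts.le, max_eq_left hns.le, hpow, ← sq_abs, ← sq_abs (d * t),
    ← mul_pow, abs_mul, abs_of_nonneg hd0]
  gcongr
  linarith

/-- For `d ∈ (0, 1/2)` and `t ∈ ℝ`, the Mandelbrot–van Ness kernel
`s ↦ (max (t - s) 0) ^ d - (max (-s) 0) ^ d` is in `L²(ℝ)` w.r.t. Lebesgue measure. -/
theorem mvn_kernel_memL2_of_pos (d t : ℝ) (hd : d ∈ Set.Ioo (0 : ℝ) (1 / 2)) :
    MemLp (fun s : ℝ => (max (t - s) 0) ^ d - (max (-s) 0) ^ d) 2 volume := by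
  obtain ⟨hd0, hd2⟩ := hd
  change MemLp (mvnKernel d t) 2 volume
  have hcont := continuous_mvnKernel hd0.le t
  rw [memLp_two_iff_integrable_sq hcont.aestronglyMeasurable]
  refine (hcont.pow 2).integrable_of_integrableOn_Iio_of_eq_zero (a := min t 0 - 1) (b := max t 0)
    ?_ fun s hs => by
      rw [Pi.pow_apply, mvnKernel_eq_zero_of_max_le d hs.le, zero_pow two_ne_zero]
  refine ((integrableOn_Iio_sub_rpow (min t 0) (p := 2 * d - 2) (by linarith)).const_mul
    ((d * t) ^ 2)).mono' (hcont.pow 2).aestronglyMeasurable ?_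
  filter_upwards [ae_restrict_mem measurableSet_Iio] with s hs
  rw [Pi.pow_apply, Real.norm_of_nonneg (sq_nonneg _)]
  exact mvnKernel_sq_le hd0.le (by linarith) (by linarith [hs.out])
end

section
/- Let a > 0 and d < 0. For every fixed t ∈ ℝ, the limit lim_{s→−∞} f_{a,d}(t,s) / |s|^{d−1} = −d·t holds; in particular |f_{a,d}(t,s)| is asymptotically equivalent to |d t|·|s|^{d−1} as s → −∞. -/
/-! With `g u = (1 + b u)^d - (1 + c u)^d`, for large `x` one has
`((x + b)^d - (x + c)^d) / x^(d-1) = (g (1/x) - g 0) / (1/x)`, a difference quotient of `g` at `0`,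
so it tends to `g' 0 = d (b - c)`. As `s → -∞` the kernel is eventually
`(-s + a)^d - (-s + (a + t))^d`, and `x = -s`, `b = a`, `c = a + t` give the limit `-d t`. -/

open MeasureTheory Filter

/-- The modified Mandelbrot–van Ness kernel
`f_{a,d}(t,s) = (a + max(-s,0))^d - (a + max(t-s,0))^d`. -/
noncomputable def modMvN (a d t s : ℝ) : ℝ :=
  (a + max (-s) 0) ^ d - (a + max (t - s) 0) ^ d

open Topology

theorem HasDerivAt.tendsto_mul_sub_inv_atTop {g : ℝ → ℝ} {L : ℝ} (h : HasDerivAt g L 0) :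
    Tendsto (fun x : ℝ => x * (g x⁻¹ - g 0)) atTop (𝓝 L) := by
  have hinv : Tendsto (fun x : ℝ => x⁻¹) atTop (𝓝[≠] 0) :=
    tendsto_inv_atTop_nhdsGT_zero.mono_right (nhdsWithin_mono _ fun _ hx => ne_of_gt hx)
  refine ((hasDerivAt_iff_tendsto_slope.mp h).comp hinv).congr fun x => ?_
  simp [slope_def_field, mul_comm]

theorem hasDerivAt_one_add_mul_rpow (b d : ℝ) :
    HasDerivAt (fun u : ℝ => (1 + b * u) ^ d) (d * b) 0 := by
  have hlin : HasDerivAt (fun u : ℝ => 1 + b * u) b 0 := by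
    simpa using ((hasDerivAt_id (0 : ℝ)).const_mul b).const_add 1
  simpa [mul_comm] using hlin.rpow_const (p := d) (by simp)

theorem tendsto_add_rpow_sub_add_rpow_div_rpow_atTop (b c d : ℝ) :
    Tendsto (fun x : ℝ => ((x + b) ^ d - (x + c) ^ d) / x ^ (d - 1)) atTop
      (𝓝 (d * (b - c))) := by
  have hderiv := (hasDerivAt_one_add_mul_rpow b d).sub (hasDerivAt_one_add_mul_rpow c d)
  rw [← mul_sub] at hderiv
  refine hderiv.tendsto_mul_sub_inv_atTop.congr' ?_
  filter_upwards [eventually_gt_atTop (max 0 (max (-b) (-c)))] with x hx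
  simp only [max_lt_iff] at hx
  obtain ⟨hx, hxb, hxc⟩ := hx
  have factor (e : ℝ) (he : 0 < x + e) :
      (x + e) ^ d = x ^ (d - 1) * (x * (1 + e * x⁻¹) ^ d) := by
    have h1 : 0 ≤ 1 + e * x⁻¹ := by
      rw [show 1 + e * x⁻¹ = (x + e) * x⁻¹ by field_simp]; positivity
    rw [← mul_assoc, ← Real.rpow_add_one hx.ne', sub_add_cancel, ← Real.mul_rpow hx.le h1]
    congr 1; field_simp
  rw [factor b (by linarith), factor c (by linarith), ← mul_sub,
    mul_div_cancel_left₀ _ (Real.rpow_pos_of_pos hx _).ne']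
  simp [mul_sub]

theorem modMvN_eventuallyEq (a d t : ℝ) :
    modMvN a d t =ᶠ[atBot] fun s => (-s + a) ^ d - (-s + (a + t)) ^ d := by
  filter_upwards [eventually_le_atBot (min 0 t)] with s hs
  rw [modMvN, max_eq_left (by linarith [min_le_left 0 t]),
    max_eq_left (by linarith [min_le_right 0 t])]
  ring_nf

theorem tendsto_abs_div_mul_of_tendsto_div {α : Type*} {l : Filter α} {f g : α → ℝ} {L : ℝ}
    (hL : L ≠ 0) (hg : ∀ᶠ x in l, 0 ≤ g x) (h : Tendsto (fun x => f x / g x) l (𝓝 L)) :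
    Tendsto (fun x => |f x| / (|L| * g x)) l (𝓝 1) := by
  have := h.abs.div_const |L|
  rw [div_self (abs_ne_zero.mpr hL)] at this
  refine this.congr' ?_
  filter_upwards [hg] with x hx
  rw [abs_div, abs_of_nonneg hx, div_div, mul_comm]

theorem modMvN_asymptotic_general (a d t : ℝ) (hd : d < 0) :
    Tendsto (fun s : ℝ => modMvN a d t s / |s| ^ (d - 1)) atBot (nhds (-d * t)) ∧
    (t ≠ 0 →
      Tendsto (fun s : ℝ => |modMvN a d t s| / (|d * t| * |s| ^ (d - 1))) atBot (nhds 1)) := by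
  have habs : ∀ᶠ s : ℝ in atBot, |s| = -s := by
    filter_upwards [eventually_le_atBot 0] with s hs using abs_of_nonpos hs
  have hlim : Tendsto (fun s : ℝ => modMvN a d t s / |s| ^ (d - 1)) atBot (𝓝 (-d * t)) := by
    have h := (tendsto_add_rpow_sub_add_rpow_div_rpow_atTop a (a + t) d).comp
      tendsto_neg_atBot_atTop
    rw [show d * (a - (a + t)) = -d * t by ring] at h
    refine h.congr' ?_
    filter_upwards [modMvN_eventuallyEq a d t, habs] with s hf hs
    simp only [Function.comp, hf, hs]
  refine ⟨hlim, fun ht => ?_⟩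
  have hdt : -d * t ≠ 0 := mul_ne_zero (neg_ne_zero.mpr hd.ne) ht
  simpa only [neg_mul, abs_neg] using
    tendsto_abs_div_mul_of_tendsto_div hdt (.of_forall fun s => by positivity) hlim

/-- For `a > 0`, `d < 0` and fixed `t ∈ ℝ`,
`lim_{s → -∞} f_{a,d}(t,s) / |s|^(d-1) = -d * t`; in particular (for `t ≠ 0`)
`|f_{a,d}(t,s)|` is asymptotically equivalent to `|d * t| * |s|^(d-1)` as `s → -∞`. -/
theorem modMvN_asymptotic (a d t : ℝ) (ha : 0 < a) (hd : d < 0) :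
    Tendsto (fun s : ℝ => modMvN a d t s / |s| ^ (d - 1)) atBot (nhds (-d * t)) ∧
    (t ≠ 0 →
      Tendsto (fun s : ℝ => |modMvN a d t s| / (|d * t| * |s| ^ (d - 1))) atBot (nhds 1)) :=
  modMvN_asymptotic_general a d t hd
end

section
/- Let a > 0 and d < 0, and let t ∈ ℝ. For every real δ > 1/(1−d), the function s ↦ f_{a,d}(t,s) satisfies ∫_ℝ |f_{a,d}(t,s)|^δ ds < ∞; in particular f_{a,d}(t,·) belongs to L¹(ℝ) ∩ L²(ℝ). -/
/-!
Since `f_{a,d}(t, s)` vanishes for `s ≥ max 0 t`, only the tail at `-∞` matters. There, for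
`s < 0` and `s ≤ 2t`, both bases `a - s` and `a + t - s` are at least `-s/2`, so the mean value
theorem gives `|f_{a,d}(t, s)| ≤ C (-s)^(d-1)`. Hence `|f_{a,d}(t, ·)|^δ` is `O((-s)^((d-1)δ))`
at `-∞`, which is integrable there because `(d-1)δ < -1` is exactly `δ > 1/(1-d)`.
The `L¹` and `L²` claims are the cases `δ = 1, 2`.
-/

open MeasureTheory

open Filter Asymptotics Set
open scoped ENNReal

lemma abs_rpow_sub_rpow_le {d x A B : ℝ} (hd : d ≤ 1) (hx : 0 < x) (hA : x ≤ A) (hB : x ≤ B) :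
    |A ^ d - B ^ d| ≤ |d| * x ^ (d - 1) * |A - B| := by
  have hderiv : ∀ y ∈ Ici x, HasDerivWithinAt (· ^ d) (d * y ^ (d - 1)) (Ici x) y := fun y hy =>
    (Real.hasDerivAt_rpow_const (Or.inl (hx.trans_le hy).ne')).hasDerivWithinAt
  have hbound : ∀ y ∈ Ici x, ‖d * y ^ (d - 1)‖ ≤ |d| * x ^ (d - 1) := fun y (hy : x ≤ y) => by
    rw [norm_mul, Real.norm_eq_abs, Real.norm_of_nonneg (Real.rpow_nonneg (hx.le.trans hy) _)]
    exact mul_le_mul_of_nonneg_left (Real.rpow_le_rpow_of_nonpos hx hy (by linarith)) (abs_nonneg d)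
  simpa only [Real.norm_eq_abs] using
    (convex_Ici x).norm_image_sub_le_of_norm_hasDerivWithin_le hderiv hbound hB hA

lemma integrableAtFilter_neg_rpow_atBot {q : ℝ} (hq : q < -1) :
    IntegrableAtFilter (fun s : ℝ => (-s) ^ q) atBot :=
  ⟨Iio (-1), Iio_mem_atBot _,
    IntegrableOn.comp_neg_Iio (f := (· ^ q))
      (by rw [neg_neg]; exact integrableOn_Ioi_rpow_of_lt hq one_pos)⟩

lemma integrable_abs_rpow_of_isBigO_atBot {g : ℝ → ℝ} (hg : Continuous g) (htop : g =ᶠ[atTop] 0)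
    {p δ : ℝ} (hbot : g =O[atBot] fun s => (-s) ^ p) (hδ : 0 < δ) (hpδ : p * δ < -1) :
    Integrable fun s => |g s| ^ δ := by
  have hrpow_bot : (fun s => |g s| ^ δ) =O[atBot] fun s => (-s) ^ (p * δ) := by
    have hpos : ∀ᶠ s : ℝ in atBot, 0 < -s := eventually_lt_atBot 0 |>.mono fun s hs => by linarith
    refine (hbot.abs_left.rpow hδ.le (hpos.mono fun s hs => by positivity)).trans_eventuallyEq ?_
    exact hpos.mono fun s hs => (Real.rpow_mul hs.le p δ).symm
  have hrpow_top : (fun s => |g s| ^ δ) =ᶠ[atTop] 0 :=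
    htop.mono fun s hs => by simp [hs, Real.zero_rpow hδ.ne']
  exact (hg.abs.rpow_const fun _ => Or.inr hδ.le).locallyIntegrable.integrable_of_isBigO_atBot_atTop
    hrpow_bot (integrableAtFilter_neg_rpow_atBot hpδ) hrpow_top.isBigO integrableAtFilter_zero

lemma continuous_modMvN {a : ℝ} (ha : 0 < a) (d t : ℝ) : Continuous (modMvN a d t) := by
  have hbase : ∀ {c : ℝ → ℝ}, Continuous c → Continuous fun s => (a + max (c s) 0) ^ d :=
    fun hc => (continuous_const.add (hc.max continuous_const)).rpow_const
      fun _ => Or.inl (add_pos_of_pos_of_nonneg ha (le_max_right _ _)).ne'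
  exact (hbase continuous_neg).sub (hbase (continuous_sub_left t))

lemma modMvN_eventuallyEq_zero_atTop (a d t : ℝ) : modMvN a d t =ᶠ[atTop] 0 := by
  filter_upwards [eventually_ge_atTop (max 0 t)] with s hs
  have h0 : max (-s) 0 = 0 := max_eq_right (by linarith [le_max_left 0 t])
  have ht : max (t - s) 0 = 0 := max_eq_right (by linarith [le_max_right 0 t])
  simp [modMvN, h0, ht]

lemma modMvN_isBigO_atBot {a d : ℝ} (ha : 0 ≤ a) (hd : d ≤ 1) (t : ℝ) :
    modMvN a d t =O[atBot] fun s => (-s) ^ (d - 1) := by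
  refine IsBigO.of_bound (|d| * |t| / 2 ^ (d - 1)) ?_
  filter_upwards [eventually_lt_atBot 0, eventually_le_atBot (2 * t)] with s hs0 hst
  have h0 : max (-s) 0 = -s := max_eq_left (by linarith)
  have ht : max (t - s) 0 = t - s := max_eq_left (by linarith)
  have hmid : 0 < -s / 2 := by linarith
  calc |modMvN a d t s| = |(a + -s) ^ d - (a + (t - s)) ^ d| := by rw [modMvN, h0, ht]
    _ ≤ |d| * (-s / 2) ^ (d - 1) * |a + -s - (a + (t - s))| :=
        abs_rpow_sub_rpow_le hd hmid (by linarith) (by linarith)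
    _ = |d| * |t| / 2 ^ (d - 1) * ‖(-s) ^ (d - 1)‖ := by
        rw [Real.div_rpow (by linarith) zero_le_two,
          Real.norm_of_nonneg (Real.rpow_nonneg (by linarith) _),
          show a + -s - (a + (t - s)) = -t by ring, abs_neg]
        ring

/-- For `a > 0`, `d < 0` and `t ∈ ℝ`: for every `δ > 1/(1-d)` the function
`s ↦ f_{a,d}(t,s)` satisfies `∫ |f_{a,d}(t,s)|^δ ds < ∞`; in particular it belongs to
`L¹(ℝ) ∩ L²(ℝ)`. -/
theorem modMvN_Lp_integrability (a d t : ℝ) (ha : 0 < a) (hd : d < 0) :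
    (∀ δ : ℝ, 1 / (1 - d) < δ →
      ∫⁻ s : ℝ, ENNReal.ofReal (|modMvN a d t s| ^ δ) ∂volume < ⊤) ∧
    MemLp (fun s : ℝ => modMvN a d t s) 1 volume ∧
    MemLp (fun s : ℝ => modMvN a d t s) 2 volume := by
  have hcont := continuous_modMvN ha d t
  have hint : ∀ δ : ℝ, 1 / (1 - d) < δ → Integrable fun s => |modMvN a d t s| ^ δ := by
    intro δ hδ
    have hδ' : 1 < δ * (1 - d) := (div_lt_iff₀ (by linarith)).mp hδ
    exact integrable_abs_rpow_of_isBigO_atBot hcont (modMvN_eventuallyEq_zero_atTop a d t)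
      (modMvN_isBigO_atBot ha.le (by linarith) t) ((div_pos one_pos (by linarith)).trans hδ)
      (by linarith)
  have hmemLp : ∀ p : ℝ≥0∞, p ≠ 0 → p ≠ ⊤ → 1 / (1 - d) < p.toReal → MemLp (modMvN a d t) p :=
    fun p hp0 hptop hp => (integrable_norm_rpow_iff hcont.aestronglyMeasurable hp0 hptop).mp
      (by simpa only [Real.norm_eq_abs] using hint _ hp)
  have hlt1 : 1 / (1 - d) < 1 := (div_lt_one (by linarith)).mpr (by linarith)
  exact ⟨fun δ hδ => (hint δ hδ).lintegral_lt_top,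
    hmemLp 1 one_ne_zero ENNReal.one_ne_top (by simpa using hlt1),
    hmemLp 2 two_ne_zero ENNReal.ofNat_ne_top (by simp only [ENNReal.toReal_ofNat]; linarith)⟩
end

section
/- Let a > 0 and d ∈ (−1/2, 0). Then for every t > 0, ∫_ℝ f_{a,d}(t,u)² du = C + a^{2d}·t − (2a^d/(d+1))·(t+a)^{d+1} + (t+a)^{2d+1}/(2d+1) + c(t)·t^{2d+1}, where C = a^{2d+1}·(2/(d+1) − 1/(2d+1)) and c(t) = ∫_{−∞}^{−a/t} ((1−y)^d − (−y)^d)² dy. -/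
open MeasureTheory

/-!
The kernel vanishes on `[t, ∞)`. On `[0, t]` it equals `a^d - (a + t - s)^d`, whose square is
integrated term by term. On `(-∞, 0]` it equals `(a - s)^d - (a + t - s)^d`, and the substitution
`s = t y + a` pulls out `t^{2d}` from the integrand and `t` from `ds`, leaving `c(t) t^{2d+1}`.
Integrability on `(-∞, 0]` comes from the mean value bound
`0 ≤ x^d - (x + t)^d ≤ -d t x^{d-1}`, whose square decays like `x^{2d-2}` with `2d - 2 < -1`.
-/

open Set

theorem integral_comp_mul_add_Iic {E : Type*} [NormedAddCommGroup E] [NormedSpace ℝ E]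
    (g : ℝ → E) (c e : ℝ) {b : ℝ} (hb : 0 < b) :
    ∫ x in Iic c, g (b * x + e) = b⁻¹ • ∫ x in Iic (b * c + e), g x := by
  set F := (Iic (b * c + e)).indicator g
  have hF : (Iic c).indicator (fun x => g (b * x + e)) = fun x => F (b * x + e) := by
    ext x
    simp only [F, indicator, mem_Iic, add_le_add_iff_right, mul_le_mul_iff_right₀ hb]
  calc ∫ x in Iic c, g (b * x + e)
      = ∫ x, (fun y => F (y + e)) (b * x) := by rw [← integral_indicator measurableSet_Iic, hF]
    _ = b⁻¹ • ∫ y, F y := by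
      rw [Measure.integral_comp_mul_left (fun y => F (y + e)), integral_add_right_eq_self,
        abs_of_pos (inv_pos.2 hb)]
    _ = b⁻¹ • ∫ x in Iic (b * c + e), g x := by rw [integral_indicator measurableSet_Iic]

theorem Real.rpow_sq {x : ℝ} (hx : 0 ≤ x) (p : ℝ) : (x ^ p) ^ 2 = x ^ (2 * p) := by
  rw [mul_comm]; exact_mod_cast (Real.rpow_mul_natCast hx p 2).symm

theorem Real.rpow_sub_rpow_add_le {x t d : ℝ} (hx : 0 < x) (ht : 0 ≤ t) (hd : d ≤ 0) :
    x ^ d - (x + t) ^ d ≤ -d * t * x ^ (d - 1) := by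
  rcases ht.eq_or_lt with rfl | ht
  · simp
  obtain ⟨c, ⟨hxc, -⟩, hc⟩ := exists_hasDerivAt_eq_slope (fun u => u ^ d)
    (fun u => d * u ^ (d - 1)) (lt_add_of_pos_right x ht)
    (continuousOn_id.rpow_const fun u hu => .inl (hx.trans_le hu.1).ne')
    (fun u hu => Real.hasDerivAt_rpow_const (.inl (hx.trans hu.1).ne'))
  rw [add_sub_cancel_left, eq_div_iff ht.ne'] at hc
  have hcx : c ^ (d - 1) ≤ x ^ (d - 1) := Real.rpow_le_rpow_of_nonpos hx hxc.le (by linarith)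
  nlinarith [mul_le_mul_of_nonneg_left hcx (by nlinarith : 0 ≤ -d * t)]

theorem integral_add_rpow {a t p : ℝ} (ha : 0 < a) (ht : 0 ≤ t) (hp : p ≠ -1) :
    ∫ x in (0 : ℝ)..t, (a + x) ^ p = ((a + t) ^ (p + 1) - a ^ (p + 1)) / (p + 1) := by
  rw [intervalIntegral.integral_comp_add_left (· ^ p), add_zero,
    integral_rpow (.inr ⟨hp, fun h => by rw [uIcc_of_le (by linarith)] at h; linarith [h.1]⟩)]

theorem integrableOn_Iic_rpow_sub {a p : ℝ} (ha : 0 < a) (hp : p < -1) :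
    IntegrableOn (fun s => (a - s) ^ p) (Iic 0) := by
  have h := (volume.measurePreserving_sub_left a).integrableOn_comp_preimage
    (Homeomorph.subLeft a).measurableEmbedding (f := fun x => x ^ p) (s := Ioi a)
  have hpre : (fun s => a - s) ⁻¹' Ioi a = Iio 0 := by ext; simp
  rw [integrableOn_Iic_iff_integrableOn_Iio, ← hpre]
  exact h.2 (integrableOn_Ioi_rpow_of_lt hp ha)

namespace modMvN

variable {a d t s : ℝ}

theorem continuous (ha : 0 < a) : Continuous (modMvN a d t) := by
  have hpos (x : ℝ) : a + max x 0 ≠ 0 := by positivity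
  exact ((continuous_const.add (continuous_neg.max continuous_const)).rpow_const
    fun _ => .inl (hpos _)).sub ((continuous_const.add ((continuous_sub_left t).max
    continuous_const)).rpow_const fun _ => .inl (hpos _))

theorem of_nonpos (ht : 0 ≤ t) (hs : s ≤ 0) :
    modMvN a d t s = (a - s) ^ d - (a + t - s) ^ d := by
  rw [modMvN, max_eq_left (by linarith), max_eq_left (by linarith), ← sub_eq_add_neg,
    add_sub_assoc]

theorem of_mem_Icc (hs : s ∈ Icc 0 t) : modMvN a d t s = a ^ d - (a + (t - s)) ^ d := by
  rw [modMvN, max_eq_right (by linarith [hs.1]), max_eq_left (by linarith [hs.2]), add_zero]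

theorem of_le (ht : 0 ≤ t) (hs : t ≤ s) : modMvN a d t s = 0 := by
  rw [modMvN, max_eq_right (by linarith), max_eq_right (by linarith), sub_self]

theorem integrableOn_Iic_zero_sq (ha : 0 < a) (hd : d ≤ 0) (ht : 0 ≤ t) :
    IntegrableOn (fun s => modMvN a d t s ^ 2) (Iic 0) := by
  refine ((integrableOn_Iic_rpow_sub ha (by linarith : 2 * d - 2 < -1)).const_mul
    ((d * t) ^ 2)).mono' ((continuous ha).pow 2).aestronglyMeasurable.restrict ?_
  filter_upwards [ae_restrict_mem measurableSet_Iic] with s (hs : s ≤ 0)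
  have hx : 0 < a - s := by linarith
  have hdiff_nonneg : 0 ≤ (a - s) ^ d - (a - s + t) ^ d :=
    sub_nonneg.2 (Real.rpow_le_rpow_of_nonpos hx (by linarith) hd)
  rw [Real.norm_eq_abs, abs_sq, of_nonpos ht hs, show a + t - s = a - s + t by ring]
  calc ((a - s) ^ d - (a - s + t) ^ d) ^ 2 ≤ (-d * t * (a - s) ^ (d - 1)) ^ 2 :=
        pow_le_pow_left₀ hdiff_nonneg (Real.rpow_sub_rpow_add_le hx ht hd) 2
    _ = (d * t) ^ 2 * (a - s) ^ (2 * d - 2) := by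
        rw [mul_pow, Real.rpow_sq hx.le, mul_sub, mul_one]; ring

theorem setIntegral_Iic_zero_sq (ha : 0 ≤ a) (ht : 0 < t) :
    ∫ s in Iic 0, modMvN a d t s ^ 2
      = (∫ y in Iic (-a / t), ((1 - y) ^ d - (-y) ^ d) ^ 2) * t ^ (2 * d + 1) := by
  have hscale := integral_comp_mul_add_Iic (fun s => modMvN a d t s ^ 2) (-a / t) a ht
  rw [mul_div_cancel₀ _ ht.ne', neg_add_cancel] at hscale
  have hrescale : ∀ y ∈ Iic (-a / t),
      modMvN a d t (t * y + a) ^ 2 = t ^ (2 * d) * ((1 - y) ^ d - (-y) ^ d) ^ 2 := by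
    intro y (hy : y ≤ -a / t)
    have hy' : t * y + a ≤ 0 := by
      rw [le_div_iff₀ ht] at hy; linarith
    have hy0 : 0 ≤ -y := by nlinarith
    rw [of_nonpos ht.le hy', show a - (t * y + a) = t * -y by ring,
      show a + t - (t * y + a) = t * (1 - y) by ring, Real.mul_rpow ht.le hy0,
      Real.mul_rpow ht.le (by linarith), ← Real.rpow_sq ht.le]
    ring
  rw [setIntegral_congr_fun measurableSet_Iic hrescale, integral_const_mul, smul_eq_mul,
    eq_inv_mul_iff_mul_eq₀ ht.ne'] at hscale
  rw [← hscale, Real.rpow_add ht, Real.rpow_one]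
  ring

theorem intervalIntegral_sq (ha : 0 < a) (ht : 0 ≤ t) (hd₁ : d ≠ -1) (hd₂ : 2 * d ≠ -1) :
    ∫ s in (0 : ℝ)..t, modMvN a d t s ^ 2
      = a ^ (2 * d) * t - 2 * a ^ d * ((a + t) ^ (d + 1) - a ^ (d + 1)) / (d + 1)
        + ((a + t) ^ (2 * d + 1) - a ^ (2 * d + 1)) / (2 * d + 1) := by
  have hint (p : ℝ) : IntervalIntegrable (fun x => (a + x) ^ p) volume 0 t :=
    ((continuous_const_add a).continuousOn.rpow_const fun x hx => by
      rw [uIcc_of_le ht] at hx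
      exact .inl (by linarith [hx.1] : 0 < a + x).ne').intervalIntegrable
  calc ∫ s in (0 : ℝ)..t, modMvN a d t s ^ 2
      = ∫ s in (0 : ℝ)..t, (fun x => (a ^ d - (a + x) ^ d) ^ 2) (t - s) := by
        refine intervalIntegral.integral_congr fun s hs => ?_
        rw [uIcc_of_le ht] at hs
        rw [of_mem_Icc hs]
    _ = ∫ x in (0 : ℝ)..t, (a ^ (2 * d) - 2 * a ^ d * (a + x) ^ d + (a + x) ^ (2 * d)) := by
        rw [intervalIntegral.integral_comp_sub_left (fun x => (a ^ d - (a + x) ^ d) ^ 2),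
          sub_self, sub_zero]
        refine intervalIntegral.integral_congr fun x hx => ?_
        rw [uIcc_of_le ht] at hx
        rw [← Real.rpow_sq ha.le, ← Real.rpow_sq (by linarith [hx.1])]
        ring
    _ = _ := by
        rw [intervalIntegral.integral_add (intervalIntegrable_const.sub ((hint d).const_mul _))
            (hint _), intervalIntegral.integral_sub intervalIntegrable_const
            ((hint d).const_mul _), intervalIntegral.integral_const_mul,
          intervalIntegral.integral_const, integral_add_rpow ha ht hd₁,
          integral_add_rpow ha ht hd₂, smul_eq_mul, sub_zero]
        ring

theorem integral_sq_eq (ha : 0 < a) (hd : d ≤ 0) (ht : 0 ≤ t) :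
    ∫ s, modMvN a d t s ^ 2
      = (∫ s in Iic 0, modMvN a d t s ^ 2) + ∫ s in (0 : ℝ)..t, modMvN a d t s ^ 2 := by
  have hIic := integrableOn_Iic_zero_sq ha hd ht
  have hIic_t : IntegrableOn (fun s => modMvN a d t s ^ 2) (Iic t) := by
    rw [← Iic_union_Ioc_eq_Iic ht]
    exact hIic.union ((continuous ha).pow 2).integrableOn_Ioc
  rw [← intervalIntegral.integral_Iic_sub_Iic hIic hIic_t, add_sub_cancel,
    setIntegral_eq_integral_of_forall_compl_eq_zero fun s hs => ?_]
  rw [of_le ht (not_le.1 hs).le, sq, mul_zero]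

end modMvN

/-- For `a > 0`, `d ∈ (-1/2, 0)` and `t > 0`,
`∫ f_{a,d}(t,u)² du = C + a^{2d} t - (2 a^d/(d+1)) (t+a)^{d+1} + (t+a)^{2d+1}/(2d+1)
  + c(t) t^{2d+1}`, with `C = a^{2d+1} (2/(d+1) - 1/(2d+1))` and
`c(t) = ∫_{-∞}^{-a/t} ((1-y)^d - (-y)^d)² dy`. -/
theorem modMvN_sq_integral (a d t : ℝ) (ha : 0 < a) (hd : d ∈ Set.Ioo (-(1 / 2) : ℝ) 0)
    (ht : 0 < t) :
    ∫ u : ℝ, (modMvN a d t u) ^ 2 =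
      a ^ (2 * d + 1) * (2 / (d + 1) - 1 / (2 * d + 1)) + a ^ (2 * d) * t
        - (2 * a ^ d / (d + 1)) * (t + a) ^ (d + 1)
        + (t + a) ^ (2 * d + 1) / (2 * d + 1)
        + (∫ y in Set.Iic (-a / t), ((1 - y) ^ d - (-y) ^ d) ^ 2) * t ^ (2 * d + 1) := by
  obtain ⟨hd₁, hd₂⟩ := hd
  have hd₁' : d + 1 ≠ 0 := by linarith
  have hd₂' : 2 * d + 1 ≠ 0 := by linarith
  rw [modMvN.integral_sq_eq ha hd₂.le ht.le, modMvN.setIntegral_Iic_zero_sq ha.le ht,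
    modMvN.intervalIntegral_sq ha ht.le (by linarith) (by linarith), add_comm t a]
  have hpow : a ^ d * a ^ (d + 1) = a ^ (2 * d + 1) := by rw [← Real.rpow_add ha]; ring_nf
  rw [← hpow]
  field_simp
  ring
end

section
/- Let a > 0 and d ∈ (−1/2, 0). Let F : ℝ → ℝ be measurable and locally bounded, and suppose there exist M > 0 and T < 0 such that |F(s)| ≤ M·|s| for all s ≤ T. Define Φ(t) = d·∫_ℝ ( (a + max(−s,0))^{d−1} − (a + max(t−s,0))^{d−1} )·F(s) ds − d·a^{d−1}·∫_0^t F(s) ds for t ∈ ℝ. Then Φ is continuous on ℝ. -/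
/-!
`Φ` is `d` times a parametric integral minus a multiple of the primitive of `F`; the primitive is
continuous because a measurable, locally bounded `F` is locally integrable. For the parametric
integral we use dominated convergence: with `p = d - 1`, for `|t| ≤ B` the mean value theorem bounds
the kernel difference by `-p B (a + max (-B - s) 0) ^ (p - 1)`, and it vanishes for `s > B`. Against
`|F s| ≤ M |s|` this dominating function decays like `|s| ^ p` at `-∞`, which is integrable because
`p < -1`.
-/

open MeasureTheory

/-- The Riemann-integral representation `Φ` of the fractional subordinator built from `F`:
`Φ(t) = d ∫_ℝ ((a + max(-s,0))^{d-1} - (a + max(t-s,0))^{d-1}) F(s) ds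
          - d a^{d-1} ∫_0^t F(s) ds`. -/
noncomputable def fracSubPhi (a d : ℝ) (F : ℝ → ℝ) (t : ℝ) : ℝ :=
  d * (∫ s : ℝ, ((a + max (-s) 0) ^ (d - 1) - (a + max (t - s) 0) ^ (d - 1)) * F s)
    - d * a ^ (d - 1) * ∫ s in (0 : ℝ)..t, F s

open Set

lemma abs_rpow_sub_rpow_le_of_nonpos {p m x y : ℝ} (hp : p ≤ 0) (hm : 0 < m)
    (hx : m ≤ x) (hy : m ≤ y) : |x ^ p - y ^ p| ≤ -p * m ^ (p - 1) * |x - y| := by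
  have hderiv : ∀ u ∈ Ici m, HasDerivWithinAt (fun u : ℝ => u ^ p) (p * u ^ (p - 1)) (Ici m) u :=
    fun u hu => (Real.hasDerivAt_rpow_const (Or.inl (hm.trans_le hu).ne')).hasDerivWithinAt
  have hbound : ∀ u ∈ Ici m, ‖p * u ^ (p - 1)‖ ≤ -p * m ^ (p - 1) := fun u hu => by
    have hu0 : 0 < u := hm.trans_le hu
    rw [Real.norm_eq_abs, abs_mul, abs_of_nonpos hp, abs_of_pos (Real.rpow_pos_of_pos hu0 _)]
    exact mul_le_mul_of_nonneg_left
      (Real.rpow_le_rpow_of_nonpos hm hu (by linarith)) (neg_nonneg.mpr hp)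
  exact Convex.norm_image_sub_le_of_norm_hasDerivWithin_le hderiv hbound (convex_Ici m) hy hx

lemma abs_rpow_add_max_sub_le {a p u v m : ℝ} (ha : 0 < a) (hp : p ≤ 0) (hu : m ≤ u)
    (hv : m ≤ v) :
    |(a + max u 0) ^ p - (a + max v 0) ^ p| ≤ -p * (a + max m 0) ^ (p - 1) * |u - v| := by
  have hm : 0 < a + max m 0 := by positivity
  calc |(a + max u 0) ^ p - (a + max v 0) ^ p|
      ≤ -p * (a + max m 0) ^ (p - 1) * |(a + max u 0) - (a + max v 0)| :=
        abs_rpow_sub_rpow_le_of_nonpos hp hm (by gcongr) (by gcongr)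
    _ ≤ -p * (a + max m 0) ^ (p - 1) * |u - v| := by
        rw [add_sub_add_left_eq_sub]
        exact mul_le_mul_of_nonneg_left (abs_max_sub_max_le_abs u v 0)
          (mul_nonneg (neg_nonneg.mpr hp) (Real.rpow_nonneg hm.le _))

lemma integrableOn_Iic_sub_rpow {b c q : ℝ} (hq : q < -1) (hc : c < b) :
    IntegrableOn (fun s => (b - s) ^ q) (Iic c) := by
  have hpre : (fun s : ℝ => b - s) ⁻¹' Ici (b - c) = Iic c := by
    ext s; simp
  rw [← hpre]
  refine ((Measure.measurePreserving_sub_left volume b).integrableOn_comp_preimage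
    (measurableEmbedding_subLeft b) (f := fun x : ℝ => x ^ q)).mpr ?_
  exact (integrableOn_Ici_iff_integrableOn_Ioi).mpr (integrableOn_Ioi_rpow_of_lt hq (by linarith))

lemma integrableOn_Iic_abs_mul_sub_rpow {b c q : ℝ} (hq : q < -2) (hc : c < b) :
    IntegrableOn (fun s => |s| * (b - s) ^ q) (Iic c) := by
  have hdom : IntegrableOn (fun s => (b - s) ^ (q + 1) + |b| * (b - s) ^ q) (Iic c) :=
    (integrableOn_Iic_sub_rpow (by linarith) hc).add
      ((integrableOn_Iic_sub_rpow (by linarith) hc).const_mul _)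
  refine hdom.mono' (by fun_prop) ((ae_restrict_iff' measurableSet_Iic).mpr
    (ae_of_all _ fun s hs => ?_))
  have hbs : 0 < b - s := by linarith [mem_Iic.mp hs]
  have hpow : 0 ≤ (b - s) ^ q := Real.rpow_nonneg hbs.le _
  have habs : |s| ≤ (b - s) + |b| := by
    have := abs_sub_le s b 0
    rwa [sub_zero, sub_zero, abs_sub_comm, abs_of_pos hbs] at this
  rw [Real.norm_eq_abs, abs_mul, abs_abs, abs_of_nonneg hpow, Real.rpow_add_one hbs.ne']
  nlinarith

lemma locallyIntegrable_of_forall_isCompact_bounded {X E : Type*} [TopologicalSpace X]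
    [T2Space X] [LocallyCompactSpace X] [MeasurableSpace X] [OpensMeasurableSpace X]
    [NormedAddCommGroup E] {μ : Measure X} [IsFiniteMeasureOnCompacts μ] {f : X → E}
    (hf : AEStronglyMeasurable f μ) (hbdd : ∀ K, IsCompact K → ∃ C, ∀ x ∈ K, ‖f x‖ ≤ C) :
    LocallyIntegrable f μ := by
  refine locallyIntegrable_iff.mpr fun K hK => ?_
  obtain ⟨C, hC⟩ := hbdd K hK
  exact Measure.integrableOn_of_bounded hK.measure_lt_top.ne hf
    (ae_restrict_of_forall_mem hK.measurableSet hC)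

lemma Continuous.rpow_add_max_const {X : Type*} [TopologicalSpace X] {f : X → ℝ} {a : ℝ}
    (hf : Continuous f) (ha : 0 < a) (p : ℝ) :
    Continuous fun x => (a + max (f x) 0) ^ p :=
  (continuous_const.add (hf.max continuous_const)).rpow_const fun _ =>
    Or.inl (add_pos_of_pos_of_nonneg ha (le_max_right _ _)).ne'

lemma integrableOn_Iic_rpow_add_max_mul_abs {a b q r M T : ℝ} {F : ℝ → ℝ} (ha : 0 < a)
    (hq : q < -2) (hF : LocallyIntegrable F) (hbound : ∀ s ≤ T, |F s| ≤ M * |s|) :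
    IntegrableOn (fun s => (a + max (b - s) 0) ^ q * |F s|) (Iic r) := by
  set c := min (min T b) r
  have hcT : c ≤ T := (min_le_left _ _).trans (min_le_left _ _)
  have hcb : c ≤ b := (min_le_left _ _).trans (min_le_right _ _)
  have hw : Continuous fun s : ℝ => (a + max (b - s) 0) ^ q :=
    (continuous_const.sub continuous_id).rpow_add_max_const ha q
  rw [← Iic_union_Icc_eq_Iic (min_le_right _ r : c ≤ r)]
  refine IntegrableOn.union ?_ ?_
  · refine ((integrableOn_Iic_abs_mul_sub_rpow hq (by linarith : c < a + b)).const_mul M).mono'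
      (hw.aestronglyMeasurable.mul hF.aestronglyMeasurable.norm).restrict
      ((ae_restrict_iff' measurableSet_Iic).mpr (ae_of_all _ fun s hs => ?_))
    have hs : s ≤ c := hs
    have hbase : a + max (b - s) 0 = a + b - s := by
      rw [max_eq_left (by linarith)]; ring
    have hpow : 0 ≤ (a + b - s) ^ q := Real.rpow_nonneg (by linarith) _
    rw [hbase, Real.norm_eq_abs, abs_mul, abs_abs, abs_of_nonneg hpow]
    calc (a + b - s) ^ q * |F s| ≤ (a + b - s) ^ q * (M * |s|) :=
          mul_le_mul_of_nonneg_left (hbound s (hs.trans hcT)) hpow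
      _ = M * (|s| * (a + b - s) ^ q) := by ring
  · exact IntegrableOn.continuousOn_mul hw.continuousOn
      (hF.integrableOn_isCompact isCompact_Icc).norm isCompact_Icc

lemma abs_rpow_kernel_sub_le_indicator {a p t B : ℝ} (ha : 0 < a) (hp : p ≤ 0) (ht : |t| ≤ B)
    (s : ℝ) :
    |(a + max (-s) 0) ^ p - (a + max (t - s) 0) ^ p|
      ≤ (Iic B).indicator (fun s => -p * B * (a + max (-B - s) 0) ^ (p - 1)) s := by
  obtain ⟨htl, htr⟩ := abs_le.mp ht
  by_cases hs : s ≤ B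
  · rw [indicator_of_mem (mem_Iic.mpr hs)]
    have hcoef : 0 ≤ -p * (a + max (-B - s) 0) ^ (p - 1) :=
      mul_nonneg (neg_nonneg.mpr hp) (Real.rpow_nonneg (by positivity) _)
    calc |(a + max (-s) 0) ^ p - (a + max (t - s) 0) ^ p|
        ≤ -p * (a + max (-B - s) 0) ^ (p - 1) * |-s - (t - s)| :=
          abs_rpow_add_max_sub_le ha hp (by linarith) (by linarith)
      _ ≤ -p * B * (a + max (-B - s) 0) ^ (p - 1) := by
          rw [show -s - (t - s) = -t by ring, abs_neg]
          nlinarith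
  · rw [indicator_of_notMem (by simpa using hs), max_eq_right (by linarith),
      max_eq_right (by linarith), sub_self, abs_zero]

theorem continuous_integral_rpow_kernel_mul {a p M T : ℝ} {F : ℝ → ℝ} (ha : 0 < a)
    (hp : p < -1) (hF : LocallyIntegrable F) (hbound : ∀ s ≤ T, |F s| ≤ M * |s|) :
    Continuous fun t => ∫ s, ((a + max (-s) 0) ^ p - (a + max (t - s) 0) ^ p) * F s := by
  refine continuous_iff_continuousAt.mpr fun t₀ => ?_
  set B := |t₀| + 1
  have hnear : ∀ᶠ t in nhds t₀, |t| ≤ B :=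
    (continuous_abs.continuousAt.eventually_lt continuousAt_const (lt_add_one |t₀|)).mono
      fun _ h => h.le
  have hkernel (f : ℝ → ℝ) (hf : Continuous f) : Continuous fun x => (a + max (f x) 0) ^ p :=
    hf.rpow_add_max_const ha p
  refine continuousAt_of_dominated (bound := (Iic B).indicator
    fun s => -p * B * (a + max (-B - s) 0) ^ (p - 1) * |F s|) ?_ ?_ ?_ ?_
  · exact Filter.Eventually.of_forall fun t =>
      ((hkernel _ continuous_neg).sub (hkernel _ (continuous_const.sub continuous_id))
        ).aestronglyMeasurable.mul hF.aestronglyMeasurable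
  · refine hnear.mono fun t ht => ae_of_all _ fun s => ?_
    rw [indicator_mul_left, norm_mul, Real.norm_eq_abs, Real.norm_eq_abs]
    exact mul_le_mul_of_nonneg_right (abs_rpow_kernel_sub_le_indicator ha (by linarith) ht s)
      (abs_nonneg _)
  · refine (integrable_indicator_iff measurableSet_Iic).mpr ?_
    simpa only [IntegrableOn, mul_assoc] using
      (integrableOn_Iic_rpow_add_max_mul_abs ha (by linarith) hF hbound).const_mul (-p * B)
  · exact ae_of_all _ fun s =>
      (continuous_const.sub (hkernel _ (continuous_id.sub continuous_const))).mul
        continuous_const |>.continuousAt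

theorem fracSubPhi_continuous_general (a d : ℝ) (ha : 0 < a) (hd : d ∈ Set.Ioo (-(1 / 2) : ℝ) 0)
    (F : ℝ → ℝ) (hFmeas : Measurable F)
    (hFloc : ∀ K : Set ℝ, IsCompact K → ∃ C : ℝ, ∀ s ∈ K, |F s| ≤ C)
    (M T : ℝ) (hbound : ∀ s ≤ T, |F s| ≤ M * |s|) :
    Continuous (fracSubPhi a d F) := by
  have hF : LocallyIntegrable F :=
    locallyIntegrable_of_forall_isCompact_bounded hFmeas.aestronglyMeasurable hFloc
  have hprimitive : Continuous fun t => ∫ s in (0 : ℝ)..t, F s :=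
    intervalIntegral.continuous_primitive
      (fun u v => (hF.integrableOn_isCompact isCompact_uIcc).intervalIntegrable) 0
  exact (continuous_const.mul (continuous_integral_rpow_kernel_mul ha (by linarith [hd.2]) hF
    hbound)).sub (continuous_const.mul hprimitive)

/-- Let `a > 0`, `d ∈ (-1/2, 0)`, and let `F : ℝ → ℝ` be measurable and
locally bounded with `|F s| ≤ M |s|` for all `s ≤ T` (with `M > 0`, `T < 0`).
Then `Φ` is continuous on `ℝ`. -/
theorem fracSubPhi_continuous (a d : ℝ) (ha : 0 < a) (hd : d ∈ Set.Ioo (-(1 / 2) : ℝ) 0)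
    (F : ℝ → ℝ) (hFmeas : Measurable F)
    (hFloc : ∀ K : Set ℝ, IsCompact K → ∃ C : ℝ, ∀ s ∈ K, |F s| ≤ C)
    (M T : ℝ) (hM : 0 < M) (hT : T < 0) (hbound : ∀ s ≤ T, |F s| ≤ M * |s|) :
    Continuous (fracSubPhi a d F) :=
  fracSubPhi_continuous_general a d ha hd F hFmeas hFloc M T hbound
end

section
/- Let β₁ > 0 and α₁ > 0, let Y : ℝ → ℝ be continuous, and fix t ∈ ℝ. Suppose lim_{s→−∞} (Y(t) − Y(s)) / (t − s) = 0. Define X(u) = β₁·u − α₁·Y(u) for u ∈ ℝ. Then the function s ↦ exp(−(X(t) − X(s))) is Lebesgue-integrable on the interval (−∞, t]. -/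
/-!
Since the slope `(Y t - Y s) / (t - s)` tends to `0`, the term `α₁ (Y t - Y s)` is eventually
at most `β₁ (t - s) / 2`, so the exponent `-(X t - X s)` is eventually bounded by
`-β₁ (t - s) / 2`. The integrand is thus `O(exp (β₁ s / 2))` at `-∞`, and it is continuous.
-/

open MeasureTheory Filter Asymptotics

theorem integrableOn_exp_Iic_of_eventually_le {φ : ℝ → ℝ} (hφ : Continuous φ) {a b : ℝ}
    (ha : 0 < a) (hle : ∀ᶠ s in atBot, φ s ≤ a * s + b) (t : ℝ) :
    IntegrableOn (fun s => Real.exp (φ s)) (Set.Iic t) := by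
  have hbigO : (fun s => Real.exp (φ s)) =O[atBot] fun s => Real.exp (a * s) :=
    IsBigO.of_bound (Real.exp b) <| hle.mono fun s hs => by
      rw [Real.norm_of_nonneg (Real.exp_pos _).le, Real.norm_of_nonneg (Real.exp_pos _).le,
        ← Real.exp_add, add_comm]
      exact Real.exp_le_exp.mpr hs
  exact (hφ.rexp.locallyIntegrable.locallyIntegrableOn _).integrableOn_of_isBigO_atBot hbigO
    (integrableAtFilter_atBot_iff.mpr ⟨0, integrableOn_exp_mul_Iic ha 0⟩)

theorem eventually_const_mul_sub_le_of_tendsto_slope {Y : ℝ → ℝ} {t : ℝ} (c : ℝ) {ε : ℝ}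
    (hε : 0 < ε) (hlim : Tendsto (fun s => (Y t - Y s) / (t - s)) atBot (nhds 0)) :
    ∀ᶠ s in atBot, c * (Y t - Y s) ≤ ε * (t - s) := by
  have hslope : ∀ᶠ s in atBot, c * ((Y t - Y s) / (t - s)) < ε :=
    (hlim.const_mul c).eventually_lt_const (by rwa [mul_zero])
  filter_upwards [hslope, eventually_lt_atBot t] with s hs hst
  have hpos : 0 < t - s := sub_pos.mpr hst
  calc c * (Y t - Y s) = c * ((Y t - Y s) / (t - s)) * (t - s) := by field_simp
    _ ≤ ε * (t - s) := by gcongr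

theorem ficogarch_exp_integrable_general (β₁ α₁ : ℝ) (hβ : 0 < β₁)
    (Y : ℝ → ℝ) (hY : Continuous Y) (t : ℝ)
    (hlim : Tendsto (fun s : ℝ => (Y t - Y s) / (t - s)) atBot (nhds 0)) :
    IntegrableOn
      (fun s : ℝ => Real.exp (-((β₁ * t - α₁ * Y t) - (β₁ * s - α₁ * Y s))))
      (Set.Iic t) volume := by
  refine integrableOn_exp_Iic_of_eventually_le (by fun_prop) (half_pos hβ)
    (b := -(β₁ / 2 * t)) ?_ t
  filter_upwards [eventually_const_mul_sub_le_of_tendsto_slope α₁ (half_pos hβ) hlim]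
    with s hs
  linarith

/-- Let `β₁ > 0`, `α₁ > 0`, `Y : ℝ → ℝ` continuous, and `t ∈ ℝ` with
`lim_{s → -∞} (Y t - Y s)/(t - s) = 0`. With `X u = β₁ u - α₁ Y u`, the function
`s ↦ exp(-(X t - X s))` is Lebesgue-integrable on `(-∞, t]`. -/
theorem ficogarch_exp_integrable (β₁ α₁ : ℝ) (hβ : 0 < β₁) (hα : 0 < α₁)
    (Y : ℝ → ℝ) (hY : Continuous Y) (t : ℝ)
    (hlim : Tendsto (fun s : ℝ => (Y t - Y s) / (t - s)) atBot (nhds 0)) :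
    IntegrableOn
      (fun s : ℝ => Real.exp (-((β₁ * t - α₁ * Y t) - (β₁ * s - α₁ * Y s))))
      (Set.Iic t) volume :=
  ficogarch_exp_integrable_general β₁ α₁ hβ Y hY t hlim
end

section
/- Let α₀, α₁, β₁ > 0 and σ₀² > 0. Let Y : ℝ → ℝ be continuous and nondecreasing with Y(0) = 0, and let μ_Y denote its Lebesgue–Stieltjes measure. Define X(t) = β₁·t − α₁·Y(t) and σ²(t) = exp(−X(t))·( σ₀² + α₀·β₁·∫_0^t exp(X(s)) ds ) for t ≥ 0. Then for every t ≥ 0, σ²(t) = σ₀² − β₁·∫_0^t (σ²(s) − α₀) ds + α₁·∫_{(0,t]} σ²(s) dμ_Y(s). -/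
/-!
Write `σ²(t) = V(t) · exp(α₁ Y(t))` with `V = ficogarchSmoothFactor`,
`V(t) = exp(-β₁ t) (σ₀² + α₀ β₁ ∫_0^t exp(β₁ s - α₁ Y s) ds)`. The factor `V` is `C¹` with
`V' · exp(α₁ Y) = -β₁ (σ² - α₀)`. Since `Y` is continuous and nondecreasing, the pushforward of
`μ_Y` under `Y` is Lebesgue measure, so `d exp(α₁ Y) = α₁ exp(α₁ Y) dμ_Y`. The equation is then
the integration by parts formula for `V · exp(α₁ Y)`, which is Fubini's theorem on the triangle
`{r < s}` of `(0, t]²`.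
-/

open MeasureTheory

/-- The pathwise FICOGARCH(1,d,1) squared volatility:
`σ²(t) = exp(-X t) (σ₀² + α₀ β₁ ∫_0^t exp(X s) ds)` with `X u = β₁ u - α₁ Y u`. -/
noncomputable def ficogarchSigmaSq (α₀ α₁ β₁ σ₀sq : ℝ) (Y : ℝ → ℝ) (t : ℝ) : ℝ :=
  Real.exp (-(β₁ * t - α₁ * Y t)) *
    (σ₀sq + α₀ * β₁ * ∫ s in (0 : ℝ)..t, Real.exp (β₁ * s - α₁ * Y s))

open Set

lemma Monotone.exists_preimage_Iic_inter_Ioc_eq {f : ℝ → ℝ} (hmono : Monotone f)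
    {a b c : ℝ} (hab : a ≤ b) (hf : ContinuousOn f (Icc a b)) (hc : c ∈ Icc (f a) (f b)) :
    ∃ m, f m = c ∧ f ⁻¹' Iic c ∩ Ioc a b = Ioc a m := by
  set T := Icc a b ∩ f ⁻¹' Iic c
  have hT : IsCompact T :=
    isCompact_Icc.of_isClosed_subset (hf.preimage_isClosed_of_isClosed isClosed_Icc isClosed_Iic)
      inter_subset_left
  obtain ⟨m, hmT, hmax⟩ := hT.exists_isGreatest ⟨a, ⟨le_rfl, hab⟩, hc.1⟩
  obtain ⟨s, hs, hfs⟩ := intermediate_value_Icc hmT.1.2 (hf.mono (Icc_subset_Icc_left hmT.1.1))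
    ⟨hmT.2, hc.2⟩
  have hfm : f m = c := le_antisymm (hmax ⟨⟨hmT.1.1.trans hs.1, hs.2⟩, hfs.le⟩) hs.1 ▸ hfs
  refine ⟨m, hfm, Subset.antisymm (fun x ⟨hx, hx'⟩ => ⟨hx'.1, hmax ⟨Ioc_subset_Icc_self hx', hx⟩⟩)
    fun x ⟨hax, hxm⟩ => ⟨(hmono hxm).trans hfm.le, hax, hxm.trans hmT.1.2⟩⟩

namespace StieltjesFunction

variable (Y : StieltjesFunction ℝ) {a b : ℝ}

theorem map_measure_restrict_Ioc (hY : Continuous Y) (hab : a ≤ b) :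
    (Y.measure.restrict (Ioc a b)).map Y = volume.restrict (Ioc (Y a) (Y b)) := by
  have : IsFiniteMeasure (Y.measure.restrict (Ioc a b)) :=
    isFiniteMeasure_restrict.2 measure_Ioc_lt_top.ne
  refine Measure.ext_of_Iic _ _ fun c => ?_
  rw [Measure.map_apply hY.measurable measurableSet_Iic, Measure.restrict_apply' measurableSet_Ioc,
    Measure.restrict_apply' measurableSet_Ioc]
  rcases lt_or_ge c (Y a) with hca | hac
  · have hpre : Y ⁻¹' Iic c ∩ Ioc a b = ∅ :=
      eq_empty_of_forall_notMem fun s ⟨hs, hs'⟩ => hca.not_ge ((Y.mono hs'.1.le).trans hs)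
    have himg : Iic c ∩ Ioc (Y a) (Y b) = ∅ :=
      eq_empty_of_forall_notMem fun u ⟨hu, hu'⟩ => hca.not_ge (hu'.1.le.trans hu)
    rw [hpre, himg, measure_empty, measure_empty]
  rcases le_or_gt c (Y b) with hcb | hbc
  · obtain ⟨m, hYm, hpre⟩ := Y.mono.exists_preimage_Iic_inter_Ioc_eq hab hY.continuousOn ⟨hac, hcb⟩
    rw [hpre, Iic_inter_Ioc_of_le hcb, Y.measure_Ioc, Real.volume_Ioc, hYm]
  · rw [(inter_eq_right (s := Y ⁻¹' Iic c)).2 fun s hs => (Y.mono hs.2).trans hbc.le,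
      (inter_eq_right (s := Iic c)).2 fun u hu => hu.2.trans hbc.le, Y.measure_Ioc, Real.volume_Ioc]

theorem setIntegral_comp_Ioc (hY : Continuous Y) (hab : a ≤ b) {h : ℝ → ℝ} (hh : Continuous h) :
    ∫ s in Ioc a b, h (Y s) ∂Y.measure = ∫ u in Y a..Y b, h u := by
  rw [← integral_map hY.measurable.aemeasurable hh.aestronglyMeasurable,
    Y.map_measure_restrict_Ioc hY hab, intervalIntegral.integral_of_le (Y.mono hab)]

theorem setIntegral_deriv_comp_Ioc (hY : Continuous Y) (hab : a ≤ b) {φ φ' : ℝ → ℝ}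
    (hφ : ∀ u, HasDerivAt φ (φ' u) u) (hφ' : Continuous φ') :
    ∫ s in Ioc a b, φ' (Y s) ∂Y.measure = φ (Y b) - φ (Y a) := by
  rw [Y.setIntegral_comp_Ioc hY hab hφ',
    intervalIntegral.integral_eq_sub_of_hasDerivAt (fun u _ => hφ u) (hφ'.intervalIntegrable _ _)]

theorem setIntegral_const_mul_exp_Ioc (hY : Continuous Y) (hab : a ≤ b) (c : ℝ) :
    ∫ s in Ioc a b, c * Real.exp (c * Y s) ∂Y.measure = Real.exp (c * Y b) - Real.exp (c * Y a) :=
  Y.setIntegral_deriv_comp_Ioc hY hab (φ := fun u => Real.exp (c * u))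
    (fun u => by simpa [mul_comm] using ((hasDerivAt_id u).const_mul c).exp) (by fun_prop)

end StieltjesFunction

section IntegrationByParts

variable {μ : Measure ℝ} {a b : ℝ} {V V' H h : ℝ → ℝ}

theorem setIntegral_mul_sub_eq_setIntegral_deriv_mul_sub [SFinite μ]
    (hV : ∀ s, HasDerivAt V (V' s) s) (hV' : IntegrableOn V' (Ioc a b))
    (hh : IntegrableOn h (Ioc a b) μ) (hH : ∀ r ∈ Ioc a b, ∫ s in Ioc r b, h s ∂μ = H b - H r) :
    ∫ s in Ioc a b, h s * (V s - V a) ∂μ = ∫ r in Ioc a b, V' r * (H b - H r) := by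
  -- With the strict `r < s` the diagonal lies on the Lebesgue side, so `μ` may have atoms.
  let F : ℝ → ℝ → ℝ := fun s r => {p : ℝ × ℝ | p.2 < p.1}.indicator (fun p => h p.1 * V' p.2) (s, r)
  have hF : Integrable (Function.uncurry F)
      ((μ.restrict (Ioc a b)).prod (volume.restrict (Ioc a b))) :=
    (hh.mul_prod hV').indicator (measurableSet_lt measurable_snd measurable_fst)
  have hFs : ∀ s ∈ Ioc a b, ∫ r in Ioc a b, F s r = h s * (V s - V a) := by
    intro s hs
    have hIio : Iio s ∩ Ioc a b = Ioo a s :=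
      Subset.antisymm (fun x ⟨hxs, hax, _⟩ => ⟨hax, hxs⟩)
        fun x ⟨hax, hxs⟩ => ⟨hxs, hax, hxs.le.trans hs.2⟩
    change ∫ r in Ioc a b, (Iio s).indicator (fun r => h s * V' r) r = _
    rw [integral_indicator measurableSet_Iio, Measure.restrict_restrict measurableSet_Iio,
      integral_const_mul, hIio, ← integral_Ioc_eq_integral_Ioo,
      ← intervalIntegral.integral_of_le hs.1.le,
      intervalIntegral.integral_eq_sub_of_hasDerivAt (fun x _ => hV x)
        ((intervalIntegrable_iff_integrableOn_Ioc_of_le hs.1.le).2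
          (hV'.mono_set (Ioc_subset_Ioc_right hs.2)))]
  have hFr : ∀ r ∈ Ioc a b, ∫ s in Ioc a b, F s r ∂μ = V' r * (H b - H r) := by
    intro r hr
    change ∫ s in Ioc a b, (Ioi r).indicator (fun s => h s * V' r) s ∂μ = _
    rw [integral_indicator measurableSet_Ioi, Measure.restrict_restrict measurableSet_Ioi,
      inter_comm, Ioc_inter_Ioi, sup_eq_right.2 hr.1.le, integral_mul_const, hH r hr, mul_comm]
  calc ∫ s in Ioc a b, h s * (V s - V a) ∂μ
      = ∫ s in Ioc a b, (∫ r in Ioc a b, F s r) ∂μ :=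
        (setIntegral_congr_fun measurableSet_Ioc hFs).symm
    _ = ∫ r in Ioc a b, ∫ s in Ioc a b, F s r ∂μ := integral_integral_swap hF
    _ = ∫ r in Ioc a b, V' r * (H b - H r) := setIntegral_congr_fun measurableSet_Ioc hFr

theorem setIntegral_mul_eq_sub_integral_deriv_mul [SFinite μ] (hab : a ≤ b)
    (hV : ∀ s, HasDerivAt V (V' s) s) (hV' : Continuous V') (hH : Continuous H)
    (hh : IntegrableOn h (Ioc a b) μ) (hHh : ∀ r ∈ Icc a b, ∫ s in Ioc r b, h s ∂μ = H b - H r) :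
    ∫ s in Ioc a b, V s * h s ∂μ = V b * H b - V a * H a - ∫ s in a..b, V' s * H s := by
  have hVc : Continuous V := continuous_iff_continuousAt.2 fun s => (hV s).continuousAt
  have hVh : IntegrableOn (fun s => V s * h s) (Ioc a b) μ :=
    hh.continuousOn_mul_of_subset hVc.continuousOn isCompact_Icc measurableSet_Ioc
      Ioc_subset_Icc_self
  have hfubini := setIntegral_mul_sub_eq_setIntegral_deriv_mul_sub hV hV'.integrableOn_Ioc hh
    fun r hr => hHh r (Ioc_subset_Icc_self hr)
  have hleft : ∫ s in Ioc a b, h s * (V s - V a) ∂μ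
      = ∫ s in Ioc a b, V s * h s ∂μ - V a * (H b - H a) := by
    have hsplit : (fun s => h s * (V s - V a)) = fun s => V s * h s - V a * h s := by
      ext s
      ring
    rw [hsplit, integral_sub hVh (hh.const_mul _), integral_const_mul, hHh a ⟨le_rfl, hab⟩]
  have hright : ∫ r in Ioc a b, V' r * (H b - H r)
      = (V b - V a) * H b - ∫ s in a..b, V' s * H s := by
    simp_rw [mul_sub]
    have hV'H : IntervalIntegrable (fun s => V' s * H s) volume a b :=
      (hV'.mul hH).intervalIntegrable a b
    have hV'Hb : IntervalIntegrable (fun s => V' s * H b) volume a b :=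
      (hV'.mul continuous_const).intervalIntegrable a b
    rw [← intervalIntegral.integral_of_le hab, intervalIntegral.integral_sub hV'Hb hV'H,
      intervalIntegral.integral_mul_const, intervalIntegral.integral_eq_sub_of_hasDerivAt
      (fun x _ => hV x) (hV'.intervalIntegrable _ _)]
  linarith

end IntegrationByParts

noncomputable def ficogarchSmoothFactor (α₀ α₁ β₁ σ₀sq : ℝ) (Y : ℝ → ℝ) (t : ℝ) : ℝ :=
  Real.exp (-(β₁ * t)) * (σ₀sq + α₀ * β₁ * ∫ s in (0 : ℝ)..t, Real.exp (β₁ * s - α₁ * Y s))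

section Ficogarch

variable (α₀ α₁ β₁ σ₀sq : ℝ)

lemma ficogarchSigmaSq_eq_ficogarchSmoothFactor_mul (Y : ℝ → ℝ) (t : ℝ) :
    ficogarchSigmaSq α₀ α₁ β₁ σ₀sq Y t
      = ficogarchSmoothFactor α₀ α₁ β₁ σ₀sq Y t * Real.exp (α₁ * Y t) := by
  rw [ficogarchSigmaSq, ficogarchSmoothFactor, neg_sub, sub_eq_add_neg, Real.exp_add]
  ring

lemma ficogarchSmoothFactor_zero (Y : ℝ → ℝ) : ficogarchSmoothFactor α₀ α₁ β₁ σ₀sq Y 0 = σ₀sq := by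
  simp [ficogarchSmoothFactor]

lemma hasDerivAt_ficogarchSmoothFactor {Y : ℝ → ℝ} (hY : Continuous Y) (t : ℝ) :
    HasDerivAt (ficogarchSmoothFactor α₀ α₁ β₁ σ₀sq Y)
      (-β₁ * ficogarchSmoothFactor α₀ α₁ β₁ σ₀sq Y t + α₀ * β₁ * Real.exp (-(α₁ * Y t))) t := by
  have hint := ((Continuous.integral_hasStrictDerivAt (f := fun s => Real.exp (β₁ * s - α₁ * Y s))
    (by fun_prop) 0 t).hasDerivAt.const_mul (α₀ * β₁)).const_add σ₀sq
  refine ((((hasDerivAt_id' t).const_mul β₁).fun_neg).exp.mul hint).congr_deriv ?_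
  have hexp : Real.exp (-(β₁ * t)) * Real.exp (β₁ * t - α₁ * Y t) = Real.exp (-(α₁ * Y t)) := by
    rw [← Real.exp_add]
    ring_nf
  rw [ficogarchSmoothFactor]
  linear_combination α₀ * β₁ * hexp

lemma continuous_ficogarchSmoothFactor {Y : ℝ → ℝ} (hY : Continuous Y) :
    Continuous (ficogarchSmoothFactor α₀ α₁ β₁ σ₀sq Y) :=
  continuous_iff_continuousAt.2 fun t =>
    (hasDerivAt_ficogarchSmoothFactor α₀ α₁ β₁ σ₀sq hY t).continuousAt

lemma integral_ficogarchSmoothFactor_deriv_mul_exp (Y : ℝ → ℝ) (t : ℝ) :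
    ∫ s in (0 : ℝ)..t, (-β₁ * ficogarchSmoothFactor α₀ α₁ β₁ σ₀sq Y s
        + α₀ * β₁ * Real.exp (-(α₁ * Y s))) * Real.exp (α₁ * Y s)
      = -β₁ * ∫ s in (0 : ℝ)..t, (ficogarchSigmaSq α₀ α₁ β₁ σ₀sq Y s - α₀) := by
  rw [← intervalIntegral.integral_const_mul]
  refine intervalIntegral.integral_congr fun s _ => ?_
  rw [ficogarchSigmaSq_eq_ficogarchSmoothFactor_mul, Real.exp_neg]
  field_simp
  ring

end Ficogarch

theorem ficogarch_sigmaSq_solves_sde_general (α₀ α₁ β₁ σ₀sq : ℝ)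
    (Y : StieltjesFunction ℝ) (hYcont : Continuous Y) (hY0 : Y 0 = 0) :
    ∀ t : ℝ, 0 ≤ t →
      ficogarchSigmaSq α₀ α₁ β₁ σ₀sq Y t =
        σ₀sq - β₁ * (∫ s in (0 : ℝ)..t, (ficogarchSigmaSq α₀ α₁ β₁ σ₀sq Y s - α₀))
          + α₁ * ∫ s in Set.Ioc 0 t, ficogarchSigmaSq α₀ α₁ β₁ σ₀sq Y s ∂Y.measure := by
  intro t ht
  have hV := hasDerivAt_ficogarchSmoothFactor α₀ α₁ β₁ σ₀sq hYcont
  have hVc := continuous_ficogarchSmoothFactor α₀ α₁ β₁ σ₀sq hYcont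
  have hV'c : Continuous fun s => -β₁ * ficogarchSmoothFactor α₀ α₁ β₁ σ₀sq Y s
      + α₀ * β₁ * Real.exp (-(α₁ * Y s)) := by fun_prop
  have hibp := setIntegral_mul_eq_sub_integral_deriv_mul (H := fun s => Real.exp (α₁ * Y s))
    ht hV hV'c (by fun_prop) (Continuous.integrableOn_Ioc (by fun_prop))
    fun r hr => Y.setIntegral_const_mul_exp_Ioc hYcont hr.2 α₁
  have hjump : ∫ s in Ioc 0 t, ficogarchSmoothFactor α₀ α₁ β₁ σ₀sq Y s
      * (α₁ * Real.exp (α₁ * Y s)) ∂Y.measure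
      = α₁ * ∫ s in Ioc 0 t, ficogarchSigmaSq α₀ α₁ β₁ σ₀sq Y s ∂Y.measure := by
    simp_rw [← integral_const_mul, ficogarchSigmaSq_eq_ficogarchSmoothFactor_mul, mul_left_comm]
  rw [integral_ficogarchSmoothFactor_deriv_mul_exp, hjump, ficogarchSmoothFactor_zero, hY0,
    mul_zero, Real.exp_zero, mul_one] at hibp
  rw [ficogarchSigmaSq_eq_ficogarchSmoothFactor_mul]
  linarith

/-- Let `α₀, α₁, β₁ > 0`, `σ₀² > 0`, and let `Y` be a continuous
nondecreasing (Stieltjes) function with `Y 0 = 0`, with Lebesgue–Stieltjes measure `μ_Y`.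
Then for every `t ≥ 0`,
`σ²(t) = σ₀² - β₁ ∫_0^t (σ²(s) - α₀) ds + α₁ ∫_{(0,t]} σ²(s) dμ_Y(s)`. -/
theorem ficogarch_sigmaSq_solves_sde (α₀ α₁ β₁ σ₀sq : ℝ)
    (hα₀ : 0 < α₀) (hα₁ : 0 < α₁) (hβ₁ : 0 < β₁) (hσ : 0 < σ₀sq)
    (Y : StieltjesFunction ℝ) (hYcont : Continuous Y) (hY0 : Y 0 = 0) :
    ∀ t : ℝ, 0 ≤ t →
      ficogarchSigmaSq α₀ α₁ β₁ σ₀sq Y t =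
        σ₀sq - β₁ * (∫ s in (0 : ℝ)..t, (ficogarchSigmaSq α₀ α₁ β₁ σ₀sq Y s - α₀))
          + α₁ * ∫ s in Set.Ioc 0 t, ficogarchSigmaSq α₀ α₁ β₁ σ₀sq Y s ∂Y.measure :=
  ficogarch_sigmaSq_solves_sde_general α₀ α₁ β₁ σ₀sq Y hYcont hY0
end
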